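/- Let M/E be a finite Galois extension and for each prime p dividing [M : E], let E_p be the fixed field of a Sylow p-subgroup of Gal(M/E). If an element α ∈ M* lies in the norm group N(M/E_p) for every prime p dividing [M : E], then α ∈ E* and α ∈ N(M/E). -/

import Mathlib

/-!
The elements of `N(M/E_p)` lie in `E_p`, so `α` is fixed by a Sylow `p`-subgroup for every `p`;
the stabiliser of `α` then has index prime to every `p ∣ [M : E]`, hence is all of `Gal(M/E)`,
and `α = β ∈ E`. By transitivity of the norm, `N_{M/E_p}(γ) = β` gives `N_{M/E}(γ) = β ^ [E_p : E]`,
and `N_{M/E}(β) = β ^ [M : E]`. The exponents `k` with `β ^ k ∈ N(M/E)` form a subgroup of `ℤ`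
containing `[M : E]` and, for each `p ∣ [M : E]`, the degree `[E_p : E]` prime to `p`; so it is `ℤ`.
-/

open IntermediateField Module

theorem Subgroup.mem_of_pow_mem_of_forall_prime_exists_pow_mem {G : Type*} [Group G]
    (N : Subgroup G) {g : G} {n : ℕ} (hn : n ≠ 0) (hgn : g ^ n ∈ N)
    (h : ∀ p ∈ n.primeFactors, ∃ d : ℕ, ¬ p ∣ d ∧ g ^ d ∈ N) : g ∈ N := by
  let T : AddSubgroup ℤ :=
    { carrier := {k | g ^ k ∈ N}
      zero_mem' := by simp
      add_mem' := fun ha hb => by simpa [zpow_add] using N.mul_mem ha hb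
      neg_mem' := fun ha => by simpa [zpow_neg] using N.inv_mem ha }
  have mem_T (k : ℤ) : k ∈ T ↔ g ^ k ∈ N := Iff.rfl
  obtain ⟨m, hm⟩ := Int.subgroup_cyclic T
  have dvd_of_pow_mem {k : ℕ} (hk : g ^ k ∈ N) : m ∣ k := by
    rw [← Int.mem_zmultiples_iff, AddSubgroup.zmultiples_eq_closure, ← hm, mem_T]
    simpa using hk
  have hm1 : m.natAbs = 1 := by
    by_contra hm1
    obtain ⟨q, hq, hq_dvd⟩ := Nat.exists_prime_and_dvd hm1
    have hqm : (q : ℤ) ∣ m := Int.natCast_dvd.mpr hq_dvd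
    have hqn : q ∈ n.primeFactors :=
      Nat.mem_primeFactors.mpr ⟨hq, Int.natCast_dvd_natCast.mp (hqm.trans (dvd_of_pow_mem hgn)), hn⟩
    obtain ⟨d, hqd, hd⟩ := h q hqn
    exact hqd (Int.natCast_dvd_natCast.mp (hqm.trans (dvd_of_pow_mem hd)))
  have : (1 : ℤ) ∈ T := by
    rw [hm, ← AddSubgroup.zmultiples_eq_closure, Int.mem_zmultiples_iff]
    exact Int.natAbs_dvd.mp (by simp [hm1])
  simpa using (mem_T 1).mp this

theorem Subgroup.eq_top_of_forall_sylow_le {G : Type*} [Group G] [Finite G] (K : Subgroup G)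
    (S : ∀ p : ℕ, Sylow p G) (h : ∀ p ∈ (Nat.card G).primeFactors, (S p : Subgroup G) ≤ K) :
    K = ⊤ := by
  rw [← Subgroup.index_eq_one, Nat.eq_one_iff_not_exists_prime_dvd]
  intro q hq hqK
  have : Fact q.Prime := ⟨hq⟩
  have hqG : q ∈ (Nat.card G).primeFactors :=
    Nat.mem_primeFactors.mpr ⟨hq, hqK.trans K.index_dvd_card, Nat.card_pos.ne'⟩
  exact (S q).not_dvd_index (hqK.trans (Subgroup.index_dvd_of_le (h q hqG)))

theorem IsGalois.finrank_fixedField_eq_index {E M : Type*} [Field E] [Field M] [Algebra E M]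
    [FiniteDimensional E M] [IsGalois E M] (H : Subgroup Gal(M/E)) :
    finrank E (fixedField H) = H.index := by
  rw [finrank_eq_fixingSubgroup_index, fixingSubgroup_fixedField]

theorem IsGalois.mem_bot_of_forall_mem_fixedField_sylow {E M : Type*} [Field E] [Field M]
    [Algebra E M] [FiniteDimensional E M] [IsGalois E M] (S : ∀ p : ℕ, Sylow p Gal(M/E)) {α : M}
    (h : ∀ p ∈ (finrank E M).primeFactors, α ∈ fixedField (S p : Subgroup Gal(M/E))) :
    α ∈ (⊥ : IntermediateField E M) := by
  have hstab : MulAction.stabilizer Gal(M/E) α = ⊤ := by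
    refine Subgroup.eq_top_of_forall_sylow_le _ S fun p hp σ hσ => ?_
    rw [IsGalois.card_aut_eq_finrank] at hp
    exact h p hp ⟨σ, hσ⟩
  rw [IsGalois.mem_bot_iff_fixed]
  intro σ
  exact (hstab ▸ Subgroup.mem_top σ : σ ∈ MulAction.stabilizer Gal(M/E) α)

theorem Algebra.norm_eq_pow_finrank_of_norm_eq_algebraMap {E K M : Type*} [Field E] [Field K]
    [Field M] [Algebra E K] [Algebra K M] [Algebra E M] [IsScalarTower E K M]
    [FiniteDimensional E K] [FiniteDimensional K M] {γ : M} {β : E}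
    (h : algebraMap K M (Algebra.norm K γ) = algebraMap E M β) :
    Algebra.norm E γ = β ^ finrank E K := by
  rw [IsScalarTower.algebraMap_apply E K M] at h
  rw [← Algebra.norm_norm (S := K), (algebraMap K M).injective h, Algebra.norm_algebraMap]

theorem Algebra.mk0_mem_range_unitsMap_norm_iff {E M : Type*} [Field E] [Field M] [Algebra E M]
    [FiniteDimensional E M] {β : E} (hβ : β ≠ 0) :
    Units.mk0 β hβ ∈ (Units.map (Algebra.norm E : M →* E)).range ↔
      ∃ γ : M, Algebra.norm E γ = β := by
  constructor
  · rintro ⟨v, hv⟩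
    exact ⟨v, congr_arg Units.val hv⟩
  · rintro ⟨γ, hγ⟩
    have hγ0 : γ ≠ 0 := by rintro rfl; exact hβ (by rw [← hγ, Algebra.norm_zero])
    exact ⟨Units.mk0 γ hγ0, Units.ext hγ⟩

/-- Let M/E be finite Galois and for each prime p dividing [M : E] let E_p be
the fixed field of a Sylow p-subgroup of Gal(M/E). If α ∈ M* lies in the norm
group N(M/E_p) for every such p, then α lies in E* and α ∈ N(M/E). -/
theorem mem_norm_group_of_mem_sylow_norm_groups
    (E M : Type*) [Field E] [Field M] [Algebra E M]
    [FiniteDimensional E M] [IsGalois E M]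
    (S : ∀ p : ℕ, Sylow p (M ≃ₐ[E] M))
    (α : M) (hα : α ≠ 0)
    (h : ∀ p ∈ (Module.finrank E M).primeFactors,
      ∃ γ : M, algebraMap (fixedField (S p : Subgroup (M ≃ₐ[E] M))) M
        (Algebra.norm (fixedField (S p : Subgroup (M ≃ₐ[E] M))) γ) = α) :
    (∃ β : E, algebraMap E M β = α) ∧
      ∃ γ : M, algebraMap E M (Algebra.norm E γ) = α := by
  obtain ⟨β, rfl⟩ : ∃ β : E, algebraMap E M β = α := by
    refine IsGalois.mem_bot_of_forall_mem_fixedField_sylow S fun p hp => ?_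
    obtain ⟨γ, rfl⟩ := h p hp
    exact SetLike.coe_mem _
  have hβ : β ≠ 0 := by rintro rfl; exact hα (map_zero _)
  let N := (Units.map (Algebra.norm E : M →* E)).range
  have pow_mem {d : ℕ} (hd : ∃ γ : M, Algebra.norm E γ = β ^ d) : Units.mk0 β hβ ^ d ∈ N := by
    convert (Algebra.mk0_mem_range_unitsMap_norm_iff (pow_ne_zero d hβ)).mpr hd using 1
    ext; simp
  have hN : Units.mk0 β hβ ∈ N := by
    refine N.mem_of_pow_mem_of_forall_prime_exists_pow_mem finrank_pos.ne'
      (pow_mem ⟨_, Algebra.norm_algebraMap β⟩) fun p hp => ?_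
    have : Fact p.Prime := ⟨Nat.prime_of_mem_primeFactors hp⟩
    obtain ⟨γ, hγ⟩ := h p hp
    refine ⟨_, ?_, pow_mem ⟨γ, Algebra.norm_eq_pow_finrank_of_norm_eq_algebraMap hγ⟩⟩
    rw [IsGalois.finrank_fixedField_eq_index]
    exact (S p).not_dvd_index
  obtain ⟨γ, hγ⟩ := (Algebra.mk0_mem_range_unitsMap_norm_iff hβ).mp hN
  exact ⟨⟨β, rfl⟩, γ, congr_arg _ hγ⟩
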